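/- arXiv:1210.4806 — 6 statements merged into one kernel-verified Lean document; each statement's English description precedes it below -/
import Mathlib

section
/- Let n be a natural number, V a ℂ-linear subspace of ℂⁿ, and k a subfield of ℂ. Then V is the set of common solutions of a family of homogeneous linear equations with coefficients in k (i.e., V is the intersection of kernels of functionals x ↦ c₁x₁ + ⋯ + cₙxₙ with all cᵢ ∈ k) if and only if V is spanned over ℂ by vectors all of whose coordinates (in the standard basis) lie in k. -/
/-!
For a `k`-subspace `W ⊆ kⁿ`, the `ℂ`-span of `W` in `ℂⁿ` has the same dimension as `W`, since
`k`-independent vectors of `kⁿ` stay `ℂ`-independent. Hence taking `ℂ`-spans commutes with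
orthogonal complements for the dot product: one inclusion is clear and both sides have dimension
`n - dim W`. So equations with coefficients in `C ⊆ kⁿ` cut out the `ℂ`-span of
`(span C)^⊥ ⊆ kⁿ`, and conversely the `ℂ`-span of `W` is cut out by the equations from `W^⊥`.
-/

open Module Matrix Submodule

namespace Submodule

section DotOrthogonal

variable {K ι : Type*} [Field K] [Fintype ι] [DecidableEq ι]

def dotOrthogonal (W : Submodule K (ι → K)) : Submodule K (ι → K) :=
  (W.map (dotProductEquiv K ι).toLinearMap).dualCoannihilator

theorem mem_dotOrthogonal {W : Submodule K (ι → K)} {x : ι → K} :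
    x ∈ W.dotOrthogonal ↔ ∀ c ∈ W, c ⬝ᵥ x = 0 := by
  rw [dotOrthogonal, mem_dualCoannihilator]
  exact ⟨fun h c hc ↦ h _ (mem_map_of_mem hc), by rintro h _ ⟨c, hc, rfl⟩; exact h c hc⟩

theorem mem_dotOrthogonal_span {C : Set (ι → K)} {x : ι → K} :
    x ∈ (span K C).dotOrthogonal ↔ ∀ c ∈ C, c ⬝ᵥ x = 0 := by
  rw [mem_dotOrthogonal]
  refine ⟨fun h c hc ↦ h c (subset_span hc), fun h ↦ ?_⟩
  have : span K C ≤ LinearMap.ker ((dotProductBilin K K).flip x) := span_le.2 h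
  exact fun c hc ↦ this hc

theorem finrank_add_finrank_dotOrthogonal (W : Submodule K (ι → K)) :
    finrank K W + finrank K W.dotOrthogonal = Fintype.card ι := by
  have := Subspace.finrank_add_finrank_dualCoannihilator_eq
    (W.map (dotProductEquiv K ι).toLinearMap)
  rwa [LinearEquiv.finrank_map_eq, finrank_fintype_fun_eq_card] at this

theorem le_dotOrthogonal_dotOrthogonal (W : Submodule K (ι → K)) :
    W ≤ W.dotOrthogonal.dotOrthogonal := fun x hx ↦
  mem_dotOrthogonal.2 fun c hc ↦ dotProduct_comm c x ▸ mem_dotOrthogonal.1 hc x hx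

theorem dotOrthogonal_dotOrthogonal (W : Submodule K (ι → K)) :
    W.dotOrthogonal.dotOrthogonal = W := by
  refine (eq_of_le_of_finrank_eq W.le_dotOrthogonal_dotOrthogonal ?_).symm
  have := W.finrank_add_finrank_dotOrthogonal
  have := W.dotOrthogonal.finrank_add_finrank_dotOrthogonal
  omega

end DotOrthogonal

section ExtendScalars

variable (K) {k ι : Type*} [CommSemiring k] [Semiring K] [Algebra k K]

/-- The base change `K ⊗[k] W`, realised inside `ι → K`. -/
def extendScalars (W : Submodule k (ι → k)) : Submodule K (ι → K) :=
  span K (Pi.algebraMap ι k K '' W)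

theorem extendScalars_span (s : Set (ι → k)) :
    (span k s).extendScalars K = span K (Pi.algebraMap ι k K '' s) := by
  rw [extendScalars, ← map_coe, map_span, span_span_of_tower]

end ExtendScalars

section FieldExtension

variable (K) {k ι : Type*} [Field k] [Field K] [Algebra k K] [Fintype ι]

theorem finrank_extendScalars (W : Submodule k (ι → k)) :
    finrank K (W.extendScalars K) = finrank k W := by
  let b := Module.finBasis k W
  have hli : LinearIndependent K (fun i ↦ algebraMap k K ∘ (b i : ι → k)) :=
    linearIndependent_algebraMap_comp_iff.2 (b.linearIndependent.map' W.subtype W.ker_subtype)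
  have hspan : span K (Set.range fun i ↦ algebraMap k K ∘ (b i : ι → k)) = W.extendScalars K := by
    have : span k (Set.range fun i ↦ (b i : ι → k)) = W := by
      rw [Set.range_comp', ← W.coe_subtype, ← map_span, b.span_eq, map_subtype_top]
    conv_rhs => rw [← this, extendScalars_span, ← Set.range_comp]
    rfl
  rw [← hspan, finrank_span_eq_card hli, Fintype.card_fin]

theorem dotOrthogonal_extendScalars [DecidableEq ι] (W : Submodule k (ι → k)) :
    W.dotOrthogonal.extendScalars K = (W.extendScalars K).dotOrthogonal := by
  refine eq_of_le_of_finrank_eq ?_ ?_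
  · refine span_le.2 ?_
    rintro _ ⟨x, hx, rfl⟩
    refine mem_dotOrthogonal_span.2 ?_
    rintro _ ⟨c, hc, rfl⟩
    simp [Pi.algebraMap, ← RingHom.map_dotProduct, mem_dotOrthogonal.1 hx c hc]
  · have := W.finrank_add_finrank_dotOrthogonal
    have := (W.extendScalars K).finrank_add_finrank_dotOrthogonal
    rw [finrank_extendScalars] at *
    omega

end FieldExtension

end Submodule

theorem Subfield.mem_range_piAlgebraMap {K ι : Type*} [Field K] {k : Subfield K} {v : ι → K} :
    v ∈ Set.range (Pi.algebraMap ι k K) ↔ ∀ j, v j ∈ k :=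
  ⟨by rintro ⟨w, rfl⟩ j; exact (w j).2, fun h ↦ ⟨fun j ↦ ⟨v j, h j⟩, rfl⟩⟩

/-- A ℂ-linear subspace `V` of `ℂⁿ` is cut out by a family of homogeneous
linear equations with coefficients in a subfield `k` of `ℂ` if and only if `V` is spanned
over `ℂ` by vectors all of whose coordinates lie in `k`. -/
theorem subspace_defined_by_equations_iff_spanned_over
    (n : ℕ) (V : Submodule ℂ (Fin n → ℂ)) (k : Subfield ℂ) :
    (∃ C : Set (Fin n → ℂ), (∀ c ∈ C, ∀ j, c j ∈ k) ∧
      (V : Set (Fin n → ℂ)) = {x | ∀ c ∈ C, ∑ j, c j * x j = 0}) ↔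
    (∃ S : Set (Fin n → ℂ), (∀ v ∈ S, ∀ j, v j ∈ k) ∧ Submodule.span ℂ S = V) := by
  have rational (T : Set (Fin n → ℂ)) :
      (∀ v ∈ T, ∀ j, v j ∈ k) ↔ ∃ T', Pi.algebraMap (Fin n) k ℂ '' T' = T := by
    simp only [← Set.subset_range_iff_exists_image_eq, Set.subset_def,
      Subfield.mem_range_piAlgebraMap]
  have solutions (C : Set (Fin n → ℂ)) :
      {x | ∀ c ∈ C, ∑ j, c j * x j = 0} = ((span ℂ C).dotOrthogonal : Set (Fin n → ℂ)) :=
    Set.ext fun _ ↦ mem_dotOrthogonal_span.symm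
  simp only [rational, solutions, SetLike.coe_set_eq]
  constructor
  · rintro ⟨_, ⟨C, rfl⟩, rfl⟩
    refine ⟨_, ⟨(span k C).dotOrthogonal, rfl⟩, ?_⟩
    rw [← extendScalars, dotOrthogonal_extendScalars, extendScalars_span]
  · rintro ⟨_, ⟨S, rfl⟩, rfl⟩
    refine ⟨_, ⟨(span k S).dotOrthogonal, rfl⟩, ?_⟩
    rw [← extendScalars_span, ← extendScalars, dotOrthogonal_extendScalars,
      dotOrthogonal_dotOrthogonal]
end

section
/- For every ℂ-linear subspace V of ℂⁿ there exists a subfield k₀ of ℂ such that V is defined over k₀, and k₀ is contained in every subfield k of ℂ over which V is defined. In other words, the field of definition of a subspace of ℂⁿ is well-defined: there is a unique smallest subfield of ℂ over which V is defined. -/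
/-!
Choose coordinates `P` such that restricting to them is an isomorphism `V ≃ K^P` (take a maximal
linearly independent family among the coordinate functionals on `V`); the preimages of the unit
vectors of `K^P` form a basis of `V` depending only on `V`, and `k₀` is generated by their
coordinates. If `V` is spanned by a set `S` of `k`-rational vectors, the restrictions of `S` to
`P` span `K^P` over `K`, hence span `k^P` over `k`, because linear independence over `k` persists
over `K`. So every `k`-rational vector of `k^P` is the restriction of a `k`-linear combination of
`S`, which lies in `V`; by injectivity of the restriction the basis vectors are `k`-rational.
-/

open Module Submodule

theorem span_eq_top_of_span_algebraMap_comp_eq_top {k K m : Type*} [Field k] [Field K]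
    [Algebra k K] [Finite m] {T : Set (m → k)}
    (h : span K ((algebraMap k K ∘ ·) '' T) = ⊤) : span k T = ⊤ := by
  have := Fintype.ofFinite m
  obtain ⟨B, -, hBspan, hBli⟩ := exists_linearIndependent k T
  have : Fintype B := @Fintype.ofFinite _ hBli.finite
  have hKli : LinearIndependent K fun b : B => algebraMap k K ∘ (b : m → k) :=
    linearIndependent_algebraMap_comp_iff.2 hBli
  have hKspan : span K (Set.range fun b : B => algebraMap k K ∘ (b : m → k)) = ⊤ := by
    let φ : (m → k) →ₗ[k] (m → K) := (Algebra.linearMap k K).compLeft m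
    refine eq_top_iff.2 (h ▸ span_le.2 ?_)
    rintro _ ⟨t, ht, rfl⟩
    have htB : t ∈ span k B := hBspan ▸ subset_span ht
    rw [← Set.image_eq_range]
    exact span_le_restrictScalars k K _ (apply_mem_span_image_of_mem_span φ htB)
  rw [← hBspan, ← Subtype.range_coe (s := B)]
  refine hBli.span_eq_top_of_card_eq_finrank' ?_
  rw [← finrank_span_eq_card hKli, hKspan, finrank_top, finrank_fintype_fun_eq_card,
    finrank_fintype_fun_eq_card]

namespace Submodule

variable {K ι : Type*} [Field K] [Finite ι]

theorem exists_bijective_restrict (V : Submodule K (ι → K)) :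
    ∃ P : Set ι, Function.Bijective ((LinearMap.funLeft K K ((↑) : P → ι)).comp V.subtype) := by
  let f : ι → Dual K V := fun i => (LinearMap.proj i).comp V.subtype
  obtain ⟨P, -, -, hspan, hli⟩ :=
    exists_linearIndepOn_extension (linearIndepOn_empty K f) (Set.empty_subset Set.univ)
  have hinj : Function.Injective ((LinearMap.funLeft K K ((↑) : P → ι)).comp V.subtype) := by
    refine LinearMap.ker_eq_bot.1 (eq_bot_iff.2 fun v hv => ?_)
    have hker : span K (f '' P) ≤ LinearMap.ker (Dual.eval K V v) := by
      refine span_le.2 ?_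
      rintro _ ⟨i, hi, rfl⟩
      exact congrFun hv ⟨i, hi⟩
    exact Subtype.ext (funext fun i => hker (hspan ⟨i, trivial, rfl⟩))
  refine ⟨P, hinj, (LinearMap.injective_iff_surjective_of_finrank_eq_finrank ?_).1 hinj⟩
  refine le_antisymm (LinearMap.finrank_le_finrank_of_injective hinj) ?_
  have := Fintype.ofFinite P
  rw [finrank_fintype_fun_eq_card, ← Subspace.dual_finrank_eq]
  exact hli.fintype_card_le_finrank

def IsDefinedOver (k : Subfield K) (V : Submodule K (ι → K)) : Prop :=
  ∃ S : Set (ι → K), (∀ v ∈ S, ∀ j, v j ∈ k) ∧ span K S = V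

variable (V : Submodule K (ι → K))

noncomputable def coordSet : Set ι := V.exists_bijective_restrict.choose

noncomputable def coordEquiv : V ≃ₗ[K] (V.coordSet → K) :=
  LinearEquiv.ofBijective _ V.exists_bijective_restrict.choose_spec

theorem map_restrict_coordSet :
    V.map (LinearMap.funLeft K K ((↑) : V.coordSet → ι)) = ⊤ := by
  have := LinearMap.range_eq_top.2 V.exists_bijective_restrict.choose_spec.2
  rwa [LinearMap.range_comp, range_subtype] at this

variable {V}

theorem coordEquiv_symm_apply_mem {k : Subfield K} (hV : V.IsDefinedOver k)
    {w : V.coordSet → K} (hw : ∀ j, w j ∈ k) (i : ι) : (V.coordEquiv.symm w : ι → K) i ∈ k := by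
  obtain ⟨S, hSk, hSV⟩ := hV
  let φ : (ι → k) →ₗ[k] (ι → K) := (Algebra.linearMap k K).compLeft ι
  let ρ : (ι → k) →ₗ[k] (V.coordSet → k) := LinearMap.funLeft k k (↑)
  have hS : φ '' (φ ⁻¹' S) = S :=
    Set.image_preimage_eq_of_subset fun v hv => ⟨fun i => ⟨v i, hSk v hv i⟩, rfl⟩
  have hρ : span k (ρ '' (φ ⁻¹' S)) = ⊤ := by
    apply span_eq_top_of_span_algebraMap_comp_eq_top (K := K)
    have : (algebraMap k K ∘ ·) '' (ρ '' (φ ⁻¹' S)) = LinearMap.funLeft K K (↑) '' S := by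
      conv_rhs => rw [← hS]
      rw [Set.image_image, Set.image_image]
      rfl
    rw [this, ← map_span, hSV, map_restrict_coordSet]
  obtain ⟨x, hx, hxw⟩ : ∃ x ∈ span k (φ ⁻¹' S), ρ x = fun j => ⟨w j, hw j⟩ := by
    rw [← mem_map, map_span, hρ]
    trivial
  have hxV : φ x ∈ V :=
    hSV ▸ span_le_restrictScalars k K S (hS ▸ apply_mem_span_image_of_mem_span φ hx)
  have : V.coordEquiv.symm w = ⟨φ x, hxV⟩ :=
    (LinearEquiv.symm_apply_eq _).2 (funext fun j => congrArg Subtype.val (congrFun hxw j).symm)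
  rw [this]
  exact (x i).2

variable (V)

noncomputable def coordBasis : Basis V.coordSet K V :=
  (Pi.basisFun K V.coordSet).map V.coordEquiv.symm

theorem span_coordBasis : span K (Set.range fun j => (V.coordBasis j : ι → K)) = V := by
  rw [show (Set.range fun j => (V.coordBasis j : ι → K)) = V.subtype '' Set.range V.coordBasis
    from Set.range_comp _ _, ← map_span, V.coordBasis.span_eq, map_top, range_subtype]

noncomputable def fieldOfDefinition : Subfield K :=
  Subfield.closure {c | ∃ j i, (V.coordBasis j : ι → K) i = c}

theorem isDefinedOver_fieldOfDefinition : V.IsDefinedOver V.fieldOfDefinition := by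
  refine ⟨_, ?_, V.span_coordBasis⟩
  rintro _ ⟨j, rfl⟩ i
  exact Subfield.subset_closure ⟨j, i, rfl⟩

variable {V}

theorem fieldOfDefinition_le {k : Subfield K} (hV : V.IsDefinedOver k) :
    V.fieldOfDefinition ≤ k := by
  classical
  refine Subfield.closure_le.2 ?_
  rintro _ ⟨j, i, rfl⟩
  rw [coordBasis, Basis.map_apply]
  refine coordEquiv_symm_apply_mem hV (fun j' => ?_) i
  rw [Pi.basisFun_apply, Pi.single_apply]
  split_ifs
  exacts [k.one_mem, k.zero_mem]

end Submodule

/-- Every ℂ-linear subspace `V` of `ℂⁿ` has a well-defined field of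
definition: there is a smallest subfield `k₀` of `ℂ` such that `V` is spanned over `ℂ`
by vectors all of whose coordinates lie in `k₀`. -/
theorem exists_smallest_field_of_definition (n : ℕ) (V : Submodule ℂ (Fin n → ℂ)) :
    ∃ k₀ : Subfield ℂ,
      (∃ S : Set (Fin n → ℂ), (∀ v ∈ S, ∀ j, v j ∈ k₀) ∧ Submodule.span ℂ S = V) ∧
      ∀ k : Subfield ℂ,
        (∃ S : Set (Fin n → ℂ), (∀ v ∈ S, ∀ j, v j ∈ k) ∧ Submodule.span ℂ S = V) →
        k₀ ≤ k :=
  ⟨V.fieldOfDefinition, V.isDefinedOver_fieldOfDefinition, fun _ => fieldOfDefinition_le⟩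
end

section
/- Let G be a group and V a finite-dimensional real vector space with a representation of G that is semisimple (semisimple as a module over the group algebra ℝ[G]). Then the complexification ℂ ⊗_ℝ V, with the induced G-action g·(z ⊗ v) = z ⊗ (g·v), is semisimple as a complex representation of G (as a module over ℂ[G]). -/
open scoped TensorProduct

/-- The complexification of a real representation: `G` acts on `ℂ ⊗[ℝ] V` by
`g • (z ⊗ v) = z ⊗ (g • v)`. -/
noncomputable def Representation.complexify {G : Type*} [Group G] {V : Type*}
    [AddCommGroup V] [Module ℝ V] (ρ : Representation ℝ G V) :
    Representation ℂ G (ℂ ⊗[ℝ] V) :=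
  ((Module.End.baseChangeHom ℝ ℂ V).toRingHom.toMonoidHom).comp ρ

/-!
As a real representation, `ℂ ⊗[ℝ] V` is the sum of the images of the equivariant maps
`v ↦ z ⊗ v` from `V`, so it is semisimple. A complex subrepresentation `W` therefore has a real
equivariant projection `π` onto it, and `x ↦ ½ (π x - i π (i x))` is a complex-linear
equivariant projection onto `W`; its kernel is a complex complement of `W`.
-/

open Complex

lemma Complex.smul_eq_re_smul_add_im_smul_I_smul {M : Type*} [AddCommGroup M] [Module ℂ M]
    [Module ℝ M] [IsScalarTower ℝ ℂ M] (c : ℂ) (x : M) :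
    c • x = c.re • x + c.im • I • x := by
  rw [← smul_assoc, ← algebraMap_smul ℂ c.re x, ← add_smul]
  conv_lhs => rw [← re_add_im c]
  simp [Complex.real_smul]

namespace LinearMap

-- The real structure is not `Module.complexToReal`, so that it can be the one `ℂ ⊗[ℝ] V` carries.
variable {L M N : Type*} [AddCommGroup L] [Module ℂ L] [Module ℝ L] [IsScalarTower ℝ ℂ L]
  [AddCommGroup M] [Module ℂ M] [Module ℝ M] [IsScalarTower ℝ ℂ M]
  [AddCommGroup N] [Module ℂ N] [Module ℝ N] [IsScalarTower ℝ ℂ N]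

noncomputable def complexLinearPart (f : M →ₗ[ℝ] N) : M →ₗ[ℂ] N where
  toFun x := (2 : ℂ)⁻¹ • (f x - I • f (I • x))
  map_add' x y := by simp only [smul_add, map_add]; module
  map_smul' c x := by
    have hI : f (I • I • x) = -f x := by rw [smul_smul, I_mul_I, neg_one_smul, map_neg]
    rw [c.smul_eq_re_smul_add_im_smul_I_smul x]
    simp only [smul_add, map_add, map_smul, smul_comm I (_ : ℝ), hI, RingHom.id_apply]
    rw [c.smul_eq_re_smul_add_im_smul_I_smul]
    match_scalars <;> simp [Complex.ext_iff, mul_comm]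

lemma complexLinearPart_apply (f : M →ₗ[ℝ] N) (x : M) :
    complexLinearPart f x = (2 : ℂ)⁻¹ • (f x - I • f (I • x)) := rfl

lemma complexLinearPart_comp_restrictScalars (f : M →ₗ[ℝ] N) (g : L →ₗ[ℂ] M) :
    complexLinearPart (f ∘ₗ g.restrictScalars ℝ) = complexLinearPart f ∘ₗ g := by
  ext x
  simp [complexLinearPart_apply]

lemma complexLinearPart_restrictScalars_comp (f : L →ₗ[ℝ] M) (g : M →ₗ[ℂ] N) :
    complexLinearPart (g.restrictScalars ℝ ∘ₗ f) = g ∘ₗ complexLinearPart f := by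
  ext x
  simp [complexLinearPart_apply]

lemma IsProj.complexLinearPart {p : Submodule ℂ M} {f : M →ₗ[ℝ] M}
    (hf : IsProj (p.restrictScalars ℝ) f) : IsProj p (complexLinearPart f) where
  map_mem x := p.smul_mem _ (p.sub_mem (hf.map_mem x) (p.smul_mem _ (hf.map_mem _)))
  map_id x hx := by
    rw [complexLinearPart_apply, hf.map_id x hx, hf.map_id _ (p.smul_mem I hx), smul_smul,
      I_mul_I, neg_one_smul, sub_neg_eq_add, ← two_smul ℂ, smul_smul,
      inv_mul_cancel₀ two_ne_zero, one_smul]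

end LinearMap

namespace Subrepresentation

variable {k G V : Type*} [Ring k] [Monoid G] [AddCommGroup V] [Module k V]
  {ρ : Representation k G V}

lemma isCompl_toSubmodule_iff {W U : Subrepresentation ρ} :
    IsCompl W.toSubmodule U.toSubmodule ↔ IsCompl W U := by
  simp only [isCompl_iff, disjoint_iff, codisjoint_iff, ← toSubmodule_inf, ← toSubmodule_sup]
  exact Iff.and (toSubmodule_injective.eq_iff' rfl) (toSubmodule_injective.eq_iff' rfl)

lemma exists_isCompl_iff_exists_isProj (W : Subrepresentation ρ) :
    (∃ U, IsCompl W U) ↔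
      ∃ π : Representation.IntertwiningMap ρ ρ, LinearMap.IsProj W.toSubmodule π.toLinearMap := by
  constructor
  · rintro ⟨U, hU⟩
    have hc := isCompl_toSubmodule_iff.mpr hU
    let π := W.toSubmodule.projection U.toSubmodule hc
    refine ⟨⟨π, fun g => LinearMap.ext fun x => ?_⟩, ⟨Submodule.projection_apply_mem hc,
      fun x hx => Submodule.projection_apply_of_mem_left hc hx⟩⟩
    have hx : ρ g x = ρ g (π x) + ρ g (x - π x) := by rw [← map_add, add_sub_cancel]
    rw [LinearMap.comp_apply, hx, map_add,
      Submodule.projection_apply_of_mem_left hc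
        (W.apply_mem_toSubmodule g (Submodule.projection_apply_mem hc x)),
      Submodule.projection_apply_of_mem_right hc
        (U.apply_mem_toSubmodule g (Submodule.sub_projection_mem hc x)), add_zero]
    rfl
  · rintro ⟨π, hπ⟩
    exact ⟨π.ker, isCompl_toSubmodule_iff.mp hπ.isCompl⟩

end Subrepresentation

namespace Representation

section RestrictScalars

variable (k : Type*) {K G M : Type*} [CommSemiring k] [CommSemiring K] [Algebra k K] [Monoid G]
  [AddCommMonoid M] [Module k M] [Module K M] [IsScalarTower k K M]

def restrictScalars (σ : Representation K G M) : Representation k G M where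
  toFun g := (σ g).restrictScalars k
  map_one' := by ext; simp
  map_mul' _ _ := by ext; simp

lemma restrictScalars_apply (σ : Representation K G M) (g : G) :
    σ.restrictScalars k g = (σ g).restrictScalars k := rfl

variable {k} in
def _root_.Subrepresentation.restrictScalars {σ : Representation K G M}
    (W : Subrepresentation σ) : Subrepresentation (σ.restrictScalars k) where
  toSubmodule := W.toSubmodule.restrictScalars k
  apply_mem_toSubmodule := W.apply_mem_toSubmodule

end RestrictScalars

section Complex

variable {G M N : Type*} [Monoid G] [AddCommGroup M] [Module ℂ M] [Module ℝ M]
  [IsScalarTower ℝ ℂ M] [AddCommGroup N] [Module ℂ N] [Module ℝ N] [IsScalarTower ℝ ℂ N]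
  {σ : Representation ℂ G M} {τ : Representation ℂ G N}

noncomputable def IntertwiningMap.complexLinearPart
    (f : IntertwiningMap (σ.restrictScalars ℝ) (τ.restrictScalars ℝ)) : IntertwiningMap σ τ where
  toLinearMap := f.toLinearMap.complexLinearPart
  isIntertwining' g := by
    have hf := f.isIntertwining' g
    rw [restrictScalars_apply, restrictScalars_apply] at hf
    rw [← LinearMap.complexLinearPart_comp_restrictScalars, hf,
      LinearMap.complexLinearPart_restrictScalars_comp]

theorem IsSemisimpleRepresentation.of_restrictScalars_real
    (h : IsSemisimpleRepresentation (σ.restrictScalars ℝ)) : IsSemisimpleRepresentation σ where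
  exists_isCompl W := by
    obtain ⟨π, hπ⟩ := (W.restrictScalars (k := ℝ)).exists_isCompl_iff_exists_isProj.mp
      (exists_isCompl _)
    exact W.exists_isCompl_iff_exists_isProj.mpr ⟨π.complexLinearPart, hπ.complexLinearPart⟩

end Complex

theorem IsSemisimpleRepresentation.trivial_tprod {k G V W : Type*} [Field k] [Monoid G]
    [AddCommGroup V] [Module k V] [AddCommGroup W] [Module k W] {ρ : Representation k G V}
    (h : IsSemisimpleRepresentation ρ) : IsSemisimpleRepresentation ((trivial k G W).tprod ρ) := by
  rw [isSemisimpleRepresentation_iff_isSemisimpleModule_asModule] at h ⊢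
  let j (w : W) : IntertwiningMap ρ ((trivial k G W).tprod ρ) :=
    ⟨TensorProduct.mk k W V w, fun g => by ext; simp⟩
  refine isSemisimpleModule_of_isSemisimpleModule_submodule'
    (p := fun w => LinearMap.range (IntertwiningMap.equivLinearMapAsModule _ _ (j w)))
    (fun w => .range _) (Submodule.eq_top_iff'.mpr fun x => ?_)
  induction x using TensorProduct.induction_on with
  | zero => exact zero_mem _
  | tmul w v => exact Submodule.mem_iSup_of_mem w ⟨v, rfl⟩
  | add x y hx hy => exact add_mem hx hy

lemma complexify_restrictScalars {G V : Type*} [Group G] [AddCommGroup V] [Module ℝ V]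
    (ρ : Representation ℝ G V) : ρ.complexify.restrictScalars ℝ = (trivial ℝ G ℂ).tprod ρ := by
  ext g : 1
  exact TensorProduct.ext' fun _ _ => rfl

end Representation

open Representation in
theorem complexify_semisimple_general {G : Type*} [Group G] {V : Type*} [AddCommGroup V]
    [Module ℝ V] (ρ : Representation ℝ G V)
    (h : IsSemisimpleModule (MonoidAlgebra ℝ G) ρ.asModule) :
    IsSemisimpleModule (MonoidAlgebra ℂ G) ρ.complexify.asModule := by
  rw [← isSemisimpleRepresentation_iff_isSemisimpleModule_asModule] at h ⊢
  apply IsSemisimpleRepresentation.of_restrictScalars_real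
  rw [complexify_restrictScalars]
  exact h.trivial_tprod

/-- The complexification of a semisimple finite-dimensional real
representation of a group `G` is semisimple as a complex representation of `G`. -/
theorem complexify_semisimple {G : Type*} [Group G] {V : Type*} [AddCommGroup V]
    [Module ℝ V] [FiniteDimensional ℝ V] (ρ : Representation ℝ G V)
    (h : IsSemisimpleModule (MonoidAlgebra ℝ G) ρ.asModule) :
    IsSemisimpleModule (MonoidAlgebra ℂ G) ρ.complexify.asModule :=
  complexify_semisimple_general ρ h
end

section
/- Let G be a group and V a finite-dimensional real vector space with a simple representation of G (the only G-invariant real subspaces are 0 and V, and V ≠ 0). Then the complexification ℂ ⊗_ℝ V with the induced G-action is either simple as a complex representation of G, or there exist two G-invariant complex subspaces W₁ and W₂ of ℂ ⊗_ℝ V, each simple as a representation of G, with ℂ ⊗_ℝ V the internal direct sum of W₁ and W₂, and with W₂ equal to the image of W₁ under the conjugation map z ⊗ v ↦ z̄ ⊗ v. -/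
/-!
Conjugation permutes the complex subrepresentations of `ℂ ⊗[ℝ] V`, and a conjugation-stable one
is the complexification of a real subrepresentation (write `x = 1 ⊗ Re x + i • (1 ⊗ Im x)` with
`2 • (1 ⊗ Re x) = x + x̄` and `2i • (1 ⊗ Im x) = x - x̄`), hence `0` or everything. So if a minimal
nonzero subrepresentation `W₁` is proper, then so is `W̄₁`, and the conjugation-stable `W₁ ⊓ W̄₁` and
`W₁ ⊔ W̄₁` are `0` and everything.
-/
open scoped TensorProduct

/-- The conjugation map on `ℂ ⊗[ℝ] V`, sending `z ⊗ v` to `z̄ ⊗ v`. -/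
noncomputable def tensorConj (V : Type*) [AddCommGroup V] [Module ℝ V] :
    (ℂ ⊗[ℝ] V) →ₗ[ℝ] (ℂ ⊗[ℝ] V) :=
  TensorProduct.map Complex.conjAe.toLinearMap LinearMap.id

open TensorProduct

theorem OrderIso.isCompl_apply_of_involutive {α : Type*} [Lattice α] [BoundedOrder α]
    (σ : α ≃o α) (hσ : Function.Involutive σ) (hfix : ∀ a, σ a = a → a = ⊥ ∨ a = ⊤) {a : α}
    (ha₀ : a ≠ ⊥) (ha₁ : a ≠ ⊤) : IsCompl a (σ a) := by
  have hinf : a ⊓ σ a = ⊥ := by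
    refine (hfix _ (by rw [map_inf, hσ, inf_comm])).resolve_right fun h ↦ ha₁ ?_
    exact top_le_iff.mp (h ▸ inf_le_left)
  have hsup : a ⊔ σ a = ⊤ := by
    refine (hfix _ (by rw [map_sup, hσ, sup_comm])).resolve_left fun h ↦ ha₀ ?_
    exact le_bot_iff.mp (h ▸ le_sup_left)
  exact .of_eq hinf hsup

namespace Representation

variable {k G V : Type*} [CommSemiring k] [Monoid G] [AddCommMonoid V] [Module k V]
  {ρ : Representation k G V}

variable (ρ) in
theorem mem_invtSubmodule_iff_forall_mem {p : Submodule k V} :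
    p ∈ ρ.invtSubmodule ↔ ∀ g, ∀ x ∈ p, ρ g x ∈ p := by
  simp only [mem_invtSubmodule, Module.End.mem_invtSubmodule]
  rfl

theorem isAtom_invtSubmodule_iff {W : ρ.invtSubmodule} :
    IsAtom W ↔ (W : Submodule k V) ≠ ⊥ ∧ ∀ U : Submodule k V, U ≤ W →
      (∀ g, ∀ x ∈ U, ρ g x ∈ U) → U = ⊥ ∨ U = W := by
  constructor
  · rintro ⟨hne, hmin⟩
    refine ⟨fun h ↦ hne (Subtype.ext h), fun U hUW hU ↦ hUW.lt_or_eq.imp (fun hlt ↦ ?_) id⟩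
    exact congrArg Subtype.val (hmin ⟨U, ρ.mem_invtSubmodule_iff_forall_mem.mpr hU⟩ hlt)
  · rintro ⟨hne, hmin⟩
    refine ⟨fun h ↦ hne (congrArg Subtype.val h), fun U hlt ↦ ?_⟩
    rcases hmin U hlt.le (ρ.mem_invtSubmodule_iff_forall_mem.mp U.2) with h | h
    · exact Subtype.ext h
    · exact absurd (Subtype.ext h) hlt.ne

end Representation

section Complexification

variable {V : Type*} [AddCommGroup V] [Module ℝ V]

@[simp]
theorem tensorConj_tmul (z : ℂ) (v : V) : tensorConj V (z ⊗ₜ v) = starRingEnd ℂ z ⊗ₜ v := rfl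

theorem tensorConj_smul (c : ℂ) (x : ℂ ⊗[ℝ] V) :
    tensorConj V (c • x) = starRingEnd ℂ c • tensorConj V x := by
  induction x using TensorProduct.induction_on with
  | zero => simp
  | tmul z v => simp [smul_tmul']
  | add x y hx hy => simp [hx, hy]

@[simp]
theorem tensorConj_tensorConj (x : ℂ ⊗[ℝ] V) : tensorConj V (tensorConj V x) = x := by
  induction x using TensorProduct.induction_on with
  | zero => simp
  | tmul z v => simp
  | add x y hx hy => simp [hx, hy]

theorem tensorConj_complexify_apply {G : Type*} [Group G] (ρ : Representation ℝ G V) (g : G)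
    (x : ℂ ⊗[ℝ] V) : tensorConj V (ρ.complexify g x) = ρ.complexify g (tensorConj V x) := by
  induction x using TensorProduct.induction_on with
  | zero => simp
  | tmul z v => rfl
  | add x y hx hy => simp [hx, hy]

noncomputable def tensorConjEquiv (V : Type*) [AddCommGroup V] [Module ℝ V] :
    (ℂ ⊗[ℝ] V) ≃ₛₗ[starRingEnd ℂ] (ℂ ⊗[ℝ] V) where
  toFun := tensorConj V
  invFun := tensorConj V
  map_add' := map_add _
  map_smul' := tensorConj_smul
  left_inv := tensorConj_tensorConj
  right_inv := tensorConj_tensorConj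

noncomputable def tensorRe (V : Type*) [AddCommGroup V] [Module ℝ V] : ℂ ⊗[ℝ] V →ₗ[ℝ] V :=
  TensorProduct.lid ℝ V ∘ₗ TensorProduct.map Complex.reLm LinearMap.id

noncomputable def tensorIm (V : Type*) [AddCommGroup V] [Module ℝ V] : ℂ ⊗[ℝ] V →ₗ[ℝ] V :=
  TensorProduct.lid ℝ V ∘ₗ TensorProduct.map Complex.imLm LinearMap.id

@[simp] theorem tensorRe_tmul (z : ℂ) (v : V) : tensorRe V (z ⊗ₜ v) = z.re • v := by
  simp [tensorRe]

@[simp] theorem tensorIm_tmul (z : ℂ) (v : V) : tensorIm V (z ⊗ₜ v) = z.im • v := by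
  simp [tensorIm]

theorem one_tmul_real_smul (r : ℝ) (v : V) : (1 : ℂ) ⊗ₜ[ℝ] (r • v) = (r : ℂ) ⊗ₜ v := by
  rw [← smul_tmul, Complex.real_smul, mul_one]

theorem one_tmul_tensorRe_add_I_smul (x : ℂ ⊗[ℝ] V) :
    (1 : ℂ) ⊗ₜ tensorRe V x + Complex.I • (1 : ℂ) ⊗ₜ tensorIm V x = x := by
  induction x using TensorProduct.induction_on with
  | zero => simp
  | tmul z v =>
    rw [tensorRe_tmul, tensorIm_tmul, one_tmul_real_smul, one_tmul_real_smul, smul_tmul',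
      ← add_tmul, smul_eq_mul, mul_comm, Complex.re_add_im]
  | add x y hx hy =>
    rw [map_add, map_add, tmul_add, tmul_add, smul_add, add_add_add_comm, hx, hy]

theorem two_smul_one_tmul_tensorRe (x : ℂ ⊗[ℝ] V) :
    (2 : ℂ) • (1 : ℂ) ⊗ₜ tensorRe V x = x + tensorConj V x := by
  induction x using TensorProduct.induction_on with
  | zero => simp
  | tmul z v =>
    rw [tensorRe_tmul, one_tmul_real_smul, smul_tmul', tensorConj_tmul, ← add_tmul,
      Complex.add_conj, smul_eq_mul]
    push_cast
    rfl
  | add x y hx hy =>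
    simp only [map_add, tmul_add, smul_add, hx, hy]
    abel

theorem two_I_smul_one_tmul_tensorIm (x : ℂ ⊗[ℝ] V) :
    (2 * Complex.I) • (1 : ℂ) ⊗ₜ tensorIm V x = x - tensorConj V x := by
  induction x using TensorProduct.induction_on with
  | zero => simp
  | tmul z v =>
    rw [tensorIm_tmul, one_tmul_real_smul, smul_tmul', tensorConj_tmul, ← sub_tmul,
      Complex.sub_conj, smul_eq_mul]
    push_cast
    ring_nf
  | add x y hx hy =>
    simp only [map_add, tmul_add, smul_add, hx, hy]
    abel

theorem eq_baseChange_of_tensorConj_mem {W : Submodule ℂ (ℂ ⊗[ℝ] V)}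
    (hW : ∀ x ∈ W, tensorConj V x ∈ W) :
    W = ((W.restrictScalars ℝ).comap (TensorProduct.mk ℝ ℂ V 1)).baseChange ℂ := by
  refine le_antisymm (fun x hx ↦ ?_) ?_
  · rw [← one_tmul_tensorRe_add_I_smul x]
    refine add_mem (Submodule.tmul_mem_baseChange_of_mem _ ?_)
      (Submodule.smul_mem _ _ (Submodule.tmul_mem_baseChange_of_mem _ ?_))
    · change (1 : ℂ) ⊗ₜ tensorRe V x ∈ W
      rw [← Submodule.smul_mem_iff W (two_ne_zero : (2 : ℂ) ≠ 0), two_smul_one_tmul_tensorRe]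
      exact add_mem hx (hW x hx)
    · change (1 : ℂ) ⊗ₜ tensorIm V x ∈ W
      rw [← Submodule.smul_mem_iff W (mul_ne_zero two_ne_zero Complex.I_ne_zero),
        two_I_smul_one_tmul_tensorIm]
      exact sub_mem hx (hW x hx)
  · rw [Submodule.baseChange_eq_span, Submodule.span_le]
    rintro _ ⟨v, hv, rfl⟩
    exact hv

noncomputable def conjSubmodule : Submodule ℂ (ℂ ⊗[ℝ] V) ≃o Submodule ℂ (ℂ ⊗[ℝ] V) :=
  Submodule.orderIsoMapComap (tensorConjEquiv V)

theorem mem_conjSubmodule {W : Submodule ℂ (ℂ ⊗[ℝ] V)} {x : ℂ ⊗[ℝ] V} :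
    x ∈ conjSubmodule W ↔ tensorConj V x ∈ W :=
  Submodule.mem_map_equiv W

theorem coe_conjSubmodule (W : Submodule ℂ (ℂ ⊗[ℝ] V)) :
    (conjSubmodule W : Set (ℂ ⊗[ℝ] V)) = tensorConj V '' W :=
  rfl

theorem conjSubmodule_involutive : Function.Involutive (conjSubmodule (V := V)) := fun W ↦ by
  ext x
  rw [mem_conjSubmodule, mem_conjSubmodule, tensorConj_tensorConj]

namespace Representation

variable {G : Type*} [Group G] (ρ : Representation ℝ G V)

theorem conjSubmodule_mem_invtSubmodule {W : Submodule ℂ (ℂ ⊗[ℝ] V)}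
    (hW : W ∈ ρ.complexify.invtSubmodule) : conjSubmodule W ∈ ρ.complexify.invtSubmodule := by
  rw [mem_invtSubmodule_iff_forall_mem] at hW ⊢
  intro g x hx
  rw [mem_conjSubmodule, tensorConj_complexify_apply]
  exact hW g _ (mem_conjSubmodule.mp hx)

noncomputable def conjInvtSubmodule :
    ρ.complexify.invtSubmodule ≃o ρ.complexify.invtSubmodule where
  toFun W := ⟨conjSubmodule W, ρ.conjSubmodule_mem_invtSubmodule W.2⟩
  invFun W := ⟨conjSubmodule W, ρ.conjSubmodule_mem_invtSubmodule W.2⟩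
  left_inv W := Subtype.ext (conjSubmodule_involutive (W : Submodule ℂ (ℂ ⊗[ℝ] V)))
  right_inv W := Subtype.ext (conjSubmodule_involutive (W : Submodule ℂ (ℂ ⊗[ℝ] V)))
  map_rel_iff' := conjSubmodule.le_iff_le

@[simp]
theorem coe_conjInvtSubmodule (W : ρ.complexify.invtSubmodule) :
    (ρ.conjInvtSubmodule W : Submodule ℂ (ℂ ⊗[ℝ] V)) = conjSubmodule W :=
  rfl

theorem conjInvtSubmodule_involutive : Function.Involutive ρ.conjInvtSubmodule :=
  fun W ↦ Subtype.ext (conjSubmodule_involutive (W : Submodule ℂ (ℂ ⊗[ℝ] V)))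

theorem comap_mk_one_mem_invtSubmodule {W : Submodule ℂ (ℂ ⊗[ℝ] V)}
    (hW : W ∈ ρ.complexify.invtSubmodule) :
    (W.restrictScalars ℝ).comap (TensorProduct.mk ℝ ℂ V 1) ∈ ρ.invtSubmodule := by
  rw [mem_invtSubmodule_iff_forall_mem] at hW ⊢
  exact fun g v hv ↦ hW g _ hv

theorem eq_bot_or_eq_top_of_conjInvtSubmodule_eq [IsSimpleOrder ρ.invtSubmodule]
    {W : ρ.complexify.invtSubmodule} (hW : ρ.conjInvtSubmodule W = W) : W = ⊥ ∨ W = ⊤ := by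
  have hconj : ∀ x ∈ (W : Submodule ℂ (ℂ ⊗[ℝ] V)), tensorConj V x ∈ (W : Submodule ℂ _) :=
    fun x hx ↦ by rwa [← hW, coe_conjInvtSubmodule, mem_conjSubmodule, tensorConj_tensorConj]
  set U := ((W : Submodule ℂ (ℂ ⊗[ℝ] V)).restrictScalars ℝ).comap (TensorProduct.mk ℝ ℂ V 1)
  have hbase : (W : Submodule ℂ (ℂ ⊗[ℝ] V)) = U.baseChange ℂ :=
    eq_baseChange_of_tensorConj_mem hconj
  rcases IsSimpleOrder.eq_bot_or_eq_top
      (⟨U, ρ.comap_mk_one_mem_invtSubmodule W.2⟩ : ρ.invtSubmodule) with h | h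
  · left
    apply Subtype.ext
    rw [hbase, show U = ⊥ from congrArg Subtype.val h, Submodule.baseChange_bot]
    rfl
  · right
    apply Subtype.ext
    rw [hbase, show U = ⊤ from congrArg Subtype.val h, Submodule.baseChange_top]
    rfl

end Representation

end Complexification

/-- The complexification of a simple finite-dimensional real representation
is either simple, or the direct sum of two simple invariant subspaces `W₁`, `W₂` that are
exchanged by the conjugation map `z ⊗ v ↦ z̄ ⊗ v`. -/
theorem complexify_of_simple {G : Type*} [Group G] {V : Type*} [AddCommGroup V]
    [Module ℝ V] [FiniteDimensional ℝ V] [Nontrivial V]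
    (ρ : Representation ℝ G V)
    (hsimple : ∀ U : Submodule ℝ V, (∀ g, ∀ x ∈ U, ρ g x ∈ U) → U = ⊥ ∨ U = ⊤) :
    (Nontrivial (ℂ ⊗[ℝ] V) ∧ ∀ W : Submodule ℂ (ℂ ⊗[ℝ] V),
        (∀ g, ∀ x ∈ W, ρ.complexify g x ∈ W) → W = ⊥ ∨ W = ⊤) ∨
    (∃ W₁ W₂ : Submodule ℂ (ℂ ⊗[ℝ] V),
      (∀ g, ∀ x ∈ W₁, ρ.complexify g x ∈ W₁) ∧
      (∀ g, ∀ x ∈ W₂, ρ.complexify g x ∈ W₂) ∧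
      W₁ ≠ ⊥ ∧
      (∀ U : Submodule ℂ (ℂ ⊗[ℝ] V), U ≤ W₁ →
        (∀ g, ∀ x ∈ U, ρ.complexify g x ∈ U) → U = ⊥ ∨ U = W₁) ∧
      W₂ ≠ ⊥ ∧
      (∀ U : Submodule ℂ (ℂ ⊗[ℝ] V), U ≤ W₂ →
        (∀ g, ∀ x ∈ U, ρ.complexify g x ∈ U) → U = ⊥ ∨ U = W₂) ∧
      W₁ ⊓ W₂ = ⊥ ∧ W₁ ⊔ W₂ = ⊤ ∧
      (W₂ : Set (ℂ ⊗[ℝ] V)) = tensorConj V '' (W₁ : Set (ℂ ⊗[ℝ] V))) := by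
  have : IsSimpleOrder ρ.invtSubmodule := ⟨fun U ↦
    (hsimple U (ρ.mem_invtSubmodule_iff_forall_mem.mp U.2)).imp Subtype.ext Subtype.ext⟩
  obtain ⟨W₁, hW₁⟩ := IsAtomic.exists_atom ρ.complexify.invtSubmodule
  set W₂ := ρ.conjInvtSubmodule W₁
  have hW₂ : IsAtom W₂ := (OrderIso.isAtom_iff _ _).mpr hW₁
  by_cases htop : W₁ = ⊤
  · subst htop
    refine .inl ⟨inferInstance, fun W hW ↦ ?_⟩
    simpa using (Representation.isAtom_invtSubmodule_iff.mp hW₁).2 W le_top hW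
  · have hcompl := ρ.conjInvtSubmodule.isCompl_apply_of_involutive
      ρ.conjInvtSubmodule_involutive (fun _ ↦ ρ.eq_bot_or_eq_top_of_conjInvtSubmodule_eq)
      hW₁.1 htop
    rw [Representation.isAtom_invtSubmodule_iff] at hW₁ hW₂
    exact .inr ⟨W₁, W₂, ρ.complexify.mem_invtSubmodule_iff_forall_mem.mp W₁.2,
      ρ.complexify.mem_invtSubmodule_iff_forall_mem.mp W₂.2, hW₁.1, hW₁.2, hW₂.1, hW₂.2,
      congrArg Subtype.val hcompl.inf_eq_bot, congrArg Subtype.val hcompl.sup_eq_top,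
      coe_conjSubmodule (W₁ : Submodule ℂ (ℂ ⊗[ℝ] V))⟩
end

section
/- Let k be a subfield of ℂ, let G be a submonoid of the multiplicative monoid of n×n complex matrices such that every element of G has all entries in k, and let W be a ℂ-linear subspace of ℂⁿ with A·W ⊆ W for every A ∈ G. Suppose that the only ℂ-linear subspaces W' ⊆ W satisfying A·W' ⊆ W' for all A ∈ G are 0 and W. If W contains a nonzero vector all of whose coordinates lie in k, then W is spanned over ℂ by vectors all of whose coordinates lie in k. -/
/-- Let `G` be a monoid of `n×n` complex matrices with entries in a
subfield `k` of `ℂ`, and let `W` be a `G`-invariant subspace of `ℂⁿ` that is simple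
(its only `G`-invariant subspaces are `0` and `W`). If `W` contains a nonzero vector with
coordinates in `k`, then `W` is spanned by vectors with coordinates in `k`. -/
theorem simple_invariant_subspace_defined_over_subfield
    (n : ℕ) (k : Subfield ℂ) (G : Submonoid (Matrix (Fin n) (Fin n) ℂ))
    (hG : ∀ A ∈ G, ∀ i j, A i j ∈ k)
    (W : Submodule ℂ (Fin n → ℂ))
    (hW : ∀ A ∈ G, ∀ x ∈ W, A.mulVec x ∈ W)
    (hsimple : ∀ W' : Submodule ℂ (Fin n → ℂ), W' ≤ W →
      (∀ A ∈ G, ∀ x ∈ W', A.mulVec x ∈ W') → W' = ⊥ ∨ W' = W)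
    (hv : ∃ v ∈ W, v ≠ 0 ∧ ∀ j, v j ∈ k) :
    ∃ S : Set (Fin n → ℂ), (∀ v ∈ S, ∀ j, v j ∈ k) ∧ Submodule.span ℂ S = W := by
  obtain ⟨v, hvW, hv0, hvk⟩ := hv
  set S : Set (Fin n → ℂ) := {w | ∃ A ∈ G, w = A.mulVec v} with hS
  refine ⟨S, ?_, ?_⟩
  · rintro w ⟨A, hA, rfl⟩ j
    simp only [Matrix.mulVec, dotProduct]
    exact Subfield.sum_mem k (fun i _ => k.mul_mem (hG A hA j i) (hvk i))
  · have hle : Submodule.span ℂ S ≤ W := by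
      rw [Submodule.span_le]
      rintro w ⟨A, hA, rfl⟩
      exact hW A hA v hvW
    have hinv : ∀ A ∈ G, ∀ x ∈ Submodule.span ℂ S, A.mulVec x ∈ Submodule.span ℂ S := by
      intro A hA x hx
      induction hx using Submodule.span_induction with
      | mem w hw =>
        obtain ⟨B, hB, rfl⟩ := hw
        rw [Matrix.mulVec_mulVec]
        exact Submodule.subset_span ⟨A * B, G.mul_mem hA hB, rfl⟩
      | zero => simp [Matrix.mulVec_zero, Submodule.zero_mem]
      | add x y _ _ hx hy =>
        rw [Matrix.mulVec_add]; exact Submodule.add_mem _ hx hy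
      | smul c x _ hx =>
        rw [Matrix.mulVec_smul]; exact Submodule.smul_mem _ c hx
    rcases hsimple _ hle hinv with h | h
    · exfalso
      have : v ∈ Submodule.span ℂ S :=
        Submodule.subset_span ⟨1, G.one_mem, by simp [Matrix.one_mulVec]⟩
      rw [h] at this
      exact hv0 (by simpa using this)
    · exact h
end

section
/- Let G be a group and ρ : G → GL(n, ℂ) a representation such that ℂⁿ is semisimple as a representation of G (semisimple as a module over ℂ[G]). Let σ : ℂ → ℂ be a field automorphism such that σ(tr ρ(g)) = tr ρ(g) for every g ∈ G. Then the σ-conjugate representation ρ^σ : g ↦ σ(ρ(g)) (σ applied entrywise to the matrix ρ(g)) is isomorphic to ρ; that is, there exists T ∈ GL(n, ℂ) with σ(ρ(g)) = T ρ(g) T⁻¹ for all g ∈ G. -/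
/-!
The proof goes through the Brauer–Nesbitt theorem: over a field of characteristic zero, a
finite-dimensional semisimple module over an algebra `A` is determined up to isomorphism by its
character `a ↦ tr(a | V)`. For `V`, `W` with equal characters, a nonzero `A`-linear map between
them splits off isomorphic summands whose complements again have equal characters, so one inducts
on `dim V + dim W`. If there is no nonzero map in either direction, the projection of `V × W`
onto `V` commutes with `End_A (V × W)`, so by Jacobson density it is the action of some `a ∈ A`,
and then `dim V = tr(a | V) = tr(a | W) = 0`.

Entrywise `σ` is a `σ`-semilinear bijection of `ℂⁿ` intertwining `ρ` with `ρ^σ`, so `ρ^σ` is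
again semisimple, and its character is `σ ∘ tr ρ = tr ρ`. An isomorphism between the two
`ℂ[G]`-modules is the matrix `T`.
-/

/-- The representation of `G` on `ℂⁿ` associated to a homomorphism `G →* GL(n, ℂ)`. -/
noncomputable def glRep {n : ℕ} {G : Type*} [Group G]
    (ρ : G →* Matrix.GeneralLinearGroup (Fin n) ℂ) :
    Representation ℂ G (Fin n → ℂ) :=
  ((Matrix.toLinAlgEquiv' : Matrix (Fin n) (Fin n) ℂ ≃ₐ[ℂ]
      Module.End ℂ (Fin n → ℂ)).toAlgHom.toRingHom.toMonoidHom).comp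
    ((Units.coeHom (Matrix (Fin n) (Fin n) ℂ)).comp ρ)

open Module
open scoped MonoidAlgebra Matrix

section ModuleCharacter

variable {k A : Type*} [Field k] [Ring A] [Algebra k A]
variable {V W : Type*} [AddCommGroup V] [Module k V] [Module A V] [IsScalarTower k A V]
  [AddCommGroup W] [Module k W] [Module A W] [IsScalarTower k A W]

variable (k A V) in
noncomputable def moduleCharacter : A →ₗ[k] k :=
  LinearMap.trace k V ∘ₗ (Algebra.lsmul k k V).toLinearMap

lemma moduleCharacter_apply (a : A) :
    moduleCharacter k A V a = LinearMap.trace k V (Algebra.lsmul k k V a) := rfl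

lemma moduleCharacter_congr (e : V ≃ₗ[A] W) :
    moduleCharacter k A V = moduleCharacter k A W := by
  ext a
  rw [moduleCharacter_apply, moduleCharacter_apply,
    ← LinearMap.trace_conj' _ (e.restrictScalars k)]
  congr 1
  ext w
  simp [LinearEquiv.conj_apply]

lemma moduleCharacter_prod [FiniteDimensional k V] [FiniteDimensional k W] :
    moduleCharacter k A (V × W) = moduleCharacter k A V + moduleCharacter k A W := by
  ext a
  rw [LinearMap.add_apply, moduleCharacter_apply, moduleCharacter_apply, moduleCharacter_apply,
    ← LinearMap.trace_prodMap']
  rfl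

lemma moduleCharacter_apply_of_forall_smul_eq [FiniteDimensional k V] {a : A} {c : k}
    (h : ∀ v : V, a • v = c • v) : moduleCharacter k A V a = finrank k V * c := by
  have : Algebra.lsmul k k V a = c • LinearMap.id := LinearMap.ext h
  rw [moduleCharacter_apply, this, map_smul, LinearMap.trace_id, smul_eq_mul, mul_comm]

instance Submodule.finiteDimensional_of_isScalarTower [FiniteDimensional k V]
    (S : Submodule A V) : FiniteDimensional k S :=
  .of_injective (S.subtype.restrictScalars k) S.injective_subtype

lemma moduleCharacter_eq_add_of_isCompl [FiniteDimensional k V] {S V' : Submodule A V}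
    (h : IsCompl S V') :
    moduleCharacter k A V = moduleCharacter k A S + moduleCharacter k A V' := by
  rw [← moduleCharacter_congr (Submodule.prodEquivOfIsCompl S V' h), moduleCharacter_prod]

lemma finrank_eq_add_of_isCompl [FiniteDimensional k V] {S V' : Submodule A V}
    (h : IsCompl S V') : finrank k V = finrank k S + finrank k V' := by
  rw [← ((Submodule.prodEquivOfIsCompl S V' h).restrictScalars k).finrank_eq, finrank_prod]

end ModuleCharacter

instance IsSemisimpleModule.prod {A V W : Type*} [Ring A] [AddCommGroup V] [Module A V]
    [AddCommGroup W] [Module A W] [IsSemisimpleModule A V] [IsSemisimpleModule A W] :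
    IsSemisimpleModule A (V × W) := by
  have := IsSemisimpleModule.sup (.range (LinearMap.inl A V W)) (.range (LinearMap.inr A V W))
  rw [LinearMap.sup_range_inl_inr] at this
  exact this.congr Submodule.topEquiv.symm

lemma exists_isCompl_linearEquiv_of_ne_zero {A V W : Type*} [Ring A] [AddCommGroup V]
    [Module A V] [AddCommGroup W] [Module A W] [IsSemisimpleModule A V] [IsSemisimpleModule A W]
    {f : V →ₗ[A] W} (hf : f ≠ 0) :
    ∃ (S V' : Submodule A V) (S' W' : Submodule A W),
      IsCompl S V' ∧ IsCompl S' W' ∧ S ≠ ⊥ ∧ Nonempty (S ≃ₗ[A] S') := by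
  obtain ⟨S, hS⟩ := exists_isCompl (LinearMap.ker f)
  obtain ⟨W', hW'⟩ := exists_isCompl (LinearMap.range f)
  refine ⟨S, _, _, W', hS.symm, hW', ?_,
    ⟨(Submodule.quotientEquivOfIsCompl _ S hS).symm ≪≫ₗ f.quotKerEquivRange⟩⟩
  rintro rfl
  exact hf (LinearMap.ker_eq_top.mp (eq_top_of_isCompl_bot hS))

lemma exists_forall_smul_eq_self_and_smul_eq_zero (k : Type*) {A V W : Type*} [CommRing k] [Ring A]
    [Algebra k A] [AddCommGroup V] [Module k V] [Module A V] [IsScalarTower k A V] [AddCommGroup W]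
    [Module k W] [Module A W] [IsScalarTower k A W] [Module.Finite k V] [Module.Finite k W]
    [IsSemisimpleModule A V] [IsSemisimpleModule A W] (hVW : ∀ f : V →ₗ[A] W, f = 0)
    (hWV : ∀ f : W →ₗ[A] V, f = 0) :
    ∃ a : A, (∀ v : V, a • v = v) ∧ ∀ w : W, a • w = 0 := by
  let p : Module.End (Module.End A (V × W)) (V × W) :=
    { toFun := fun x => (x.1, 0)
      map_add' := fun x y => by simp
      map_smul' := fun φ x => by
        have h₁ : (φ (x.1, 0)).2 = 0 := by
          simpa using
            LinearMap.congr_fun (hVW (LinearMap.snd A V W ∘ₗ φ ∘ₗ LinearMap.inl A V W)) x.1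
        have h₂ : (φ (0, x.2)).1 = 0 := by
          simpa using
            LinearMap.congr_fun (hWV (LinearMap.fst A V W ∘ₗ φ ∘ₗ LinearMap.inr A V W)) x.2
        have hx : φ x = φ (x.1, 0) + φ (0, x.2) := by
          rw [← map_add, Prod.mk_add_mk, add_zero, zero_add]
        ext
        · simp [Module.End.smul_def, hx, h₂]
        · simp [Module.End.smul_def, h₁] }
  have : Module.Finite (Module.End A (V × W)) (V × W) := .of_restrictScalars_finite k _ _
  obtain ⟨a, ha⟩ := Module.Finite.toModuleEnd_moduleEnd_surjective p
  exact ⟨a, fun v => congr(($ha (v, 0)).1), fun w => congr(($ha (0, w)).2)⟩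

section BrauerNesbitt

variable {k A : Type*} [Field k] [Ring A] [Algebra k A]
variable {V W : Type*} [AddCommGroup V] [Module k V] [Module A V] [IsScalarTower k A V]
  [AddCommGroup W] [Module k W] [Module A W] [IsScalarTower k A W]
  [FiniteDimensional k V] [FiniteDimensional k W] [IsSemisimpleModule A V] [IsSemisimpleModule A W]

lemma exists_lt_moduleCharacter_eq_of_ne_zero {f : V →ₗ[A] W} (hf : f ≠ 0)
    (hχ : moduleCharacter k A V = moduleCharacter k A W) :
    ∃ (V' : Submodule A V) (W' : Submodule A W),
      finrank k V' + finrank k W' < finrank k V + finrank k W ∧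
      moduleCharacter k A V' = moduleCharacter k A W' ∧
      (Nonempty (V' ≃ₗ[A] W') → Nonempty (V ≃ₗ[A] W)) := by
  obtain ⟨S, V', S', W', hV, hW, hS, ⟨e⟩⟩ := exists_isCompl_linearEquiv_of_ne_zero hf
  have hSpos : 0 < finrank k S := finrank_pos_iff.mpr (Submodule.nontrivial_iff_ne_bot.mpr hS)
  refine ⟨V', W', ?_, ?_, fun ⟨e'⟩ => ⟨(Submodule.prodEquivOfIsCompl S V' hV).symm ≪≫ₗ
    e.prodCongr e' ≪≫ₗ Submodule.prodEquivOfIsCompl S' W' hW⟩⟩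
  · rw [finrank_eq_add_of_isCompl hV, finrank_eq_add_of_isCompl hW,
      ← (e.restrictScalars k).finrank_eq]
    omega
  · rw [moduleCharacter_eq_add_of_isCompl hV, moduleCharacter_eq_add_of_isCompl hW,
      moduleCharacter_congr e] at hχ
    exact add_left_cancel hχ

theorem nonempty_linearEquiv_of_moduleCharacter_eq [CharZero k]
    (hχ : moduleCharacter k A V = moduleCharacter k A W) : Nonempty (V ≃ₗ[A] W) := by
  induction hd : finrank k V + finrank k W using Nat.strong_induction_on generalizing V W with
  | _ d ih =>
    by_cases hVW : ∃ f : V →ₗ[A] W, f ≠ 0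
    · obtain ⟨f, hf⟩ := hVW
      obtain ⟨V', W', hlt, hχ', lift⟩ := exists_lt_moduleCharacter_eq_of_ne_zero hf hχ
      exact lift (ih _ (hd ▸ hlt) hχ' rfl)
    by_cases hWV : ∃ f : W →ₗ[A] V, f ≠ 0
    · obtain ⟨f, hf⟩ := hWV
      obtain ⟨W', V', hlt, hχ', lift⟩ := exists_lt_moduleCharacter_eq_of_ne_zero hf hχ.symm
      exact (lift ((ih _ (by omega) hχ'.symm rfl).map LinearEquiv.symm)).map LinearEquiv.symm
    push Not at hVW hWV
    obtain ⟨a, haV, haW⟩ := exists_forall_smul_eq_self_and_smul_eq_zero k hVW hWV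
    have hV : finrank k V = 0 := by
      have := congr($hχ a)
      rw [moduleCharacter_apply_of_forall_smul_eq (c := 1) (by simpa using haV),
        moduleCharacter_apply_of_forall_smul_eq (c := 0) (by simpa using haW)] at this
      simpa using this
    have hW : finrank k W = 0 := by
      have := congr($hχ 1)
      rw [moduleCharacter_apply_of_forall_smul_eq (c := 1) (by simp),
        moduleCharacter_apply_of_forall_smul_eq (c := 1) (by simp), hV] at this
      simpa using this.symm
    have := finrank_zero_iff.mp hV
    have := finrank_zero_iff.mp hW
    exact ⟨.ofSubsingleton V W⟩

end BrauerNesbitt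

namespace Representation

variable {G : Type*} [Monoid G]

section Semilinear

variable {k k' V V' : Type*} [CommRing k] [CommRing k'] [AddCommGroup V] [Module k V]
  [AddCommGroup V'] [Module k' V'] {ρ : Representation k G V} {ρ' : Representation k' G V'}
  {σ : k ≃+* k'} (e : V →ₛₗ[(σ : k →+* k')] V')

lemma map_asAlgebraHom_apply (he : ∀ g v, e (ρ g v) = ρ' g (e v)) (a : k[G]) (v : V) :
    e (ρ.asAlgebraHom a v) = ρ'.asAlgebraHom (MonoidAlgebra.mapRingEquiv G σ a) (e v) := by
  induction a using MonoidAlgebra.induction_linear with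
  | zero => simp
  | add a b ha hb => simp [ha, hb]
  | single g c => simp [asAlgebraHom_single, MonoidAlgebra.mapRingEquiv_single, he]

theorem isSemisimpleModule_asModule_of_semilinear (he : ∀ g v, e (ρ g v) = ρ' g (e v))
    (hbij : Function.Bijective e)
    [IsSemisimpleModule k[G] ρ.asModule] : IsSemisimpleModule k'[G] ρ'.asModule := by
  let e' : ρ.asModule →ₛₗ[(MonoidAlgebra.mapRingEquiv G σ : k[G] →+* k'[G])]
      ρ'.asModule :=
    { toFun := fun x => ρ'.asModuleEquiv.symm (e (ρ.asModuleEquiv x))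
      map_add' := fun x y => by simp
      map_smul' := fun a x => by
        apply ρ'.asModuleEquiv.injective
        simp [asModuleEquiv_map_smul, map_asAlgebraHom_apply e he] }
  refine (e'.isSemisimpleModule_iff_of_bijective ?_).mp ‹_›
  exact ρ'.asModuleEquiv.symm.bijective.comp (hbij.comp ρ.asModuleEquiv.bijective)

end Semilinear

variable {k V V' : Type*} [Field k] [AddCommGroup V] [Module k V] [AddCommGroup V'] [Module k V']

lemma moduleCharacter_asModule (ρ : Representation k G V) :
    moduleCharacter k k[G] ρ.asModule =
      LinearMap.trace k V ∘ₗ ρ.asAlgebraHom.toLinearMap := by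
  refine LinearMap.ext fun a => ?_
  rw [moduleCharacter_apply, ← LinearMap.trace_conj' _ ρ.asModuleEquiv]
  rfl

lemma moduleCharacter_asModule_eq {ρ : Representation k G V} {ρ' : Representation k G V'}
    (h : ∀ g, LinearMap.trace k V (ρ g) = LinearMap.trace k V' (ρ' g)) :
    moduleCharacter k k[G] ρ.asModule = moduleCharacter k k[G] ρ'.asModule := by
  rw [moduleCharacter_asModule, moduleCharacter_asModule]
  ext g
  simpa using h g

lemma exists_linearEquiv_of_asModule {ρ : Representation k G V} {ρ' : Representation k G V'}
    (e : ρ.asModule ≃ₗ[k[G]] ρ'.asModule) :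
    ∃ E : V ≃ₗ[k] V', ∀ g v, E (ρ g v) = ρ' g (E v) := by
  refine ⟨ρ.asModuleEquiv.symm ≪≫ₗ e.restrictScalars k ≪≫ₗ ρ'.asModuleEquiv,
    fun g v => ?_⟩
  change ρ'.asModuleEquiv (e (ρ.asModuleEquiv.symm (ρ g v))) = _
  rw [asModuleEquiv_symm_map_rho, map_smul, asModuleEquiv_map_smul, asAlgebraHom_of]
  rfl

end Representation

lemma Matrix.exists_forall_eq_mul_mul_inv_of_linearEquiv {n R ι : Type*} [Fintype n]
    [DecidableEq n] [CommRing R] {M N : ι → Matrix n n R} (E : (n → R) ≃ₗ[R] n → R)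
    (h : ∀ i v, E (M i *ᵥ v) = N i *ᵥ E v) :
    ∃ T : GL n R, ∀ i, N i = T * M i * T⁻¹ := by
  let T : GL n R := Units.map LinearMap.toMatrixAlgEquiv'.toMonoidHom
    (LinearMap.GeneralLinearGroup.ofLinearEquiv E)
  have hT : ∀ v, (T : Matrix n n R) *ᵥ v = E v := LinearMap.toMatrix'_mulVec _
  refine ⟨T, fun i => ?_⟩
  rw [Units.eq_mul_inv_iff_mul_eq]
  apply Matrix.toLin'.injective
  refine LinearMap.ext fun v => ?_
  simp [hT, h]

section glRep

variable {n : ℕ} {G : Type*} [Group G] (ρ : G →* GL (Fin n) ℂ)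

lemma trace_glRep (g : G) :
    LinearMap.trace ℂ _ (glRep ρ g) = (ρ g : Matrix (Fin n) (Fin n) ℂ).trace :=
  Matrix.trace_toLin'_eq _

theorem isSemisimpleModule_glRep_map (σ : ℂ ≃+* ℂ)
    [IsSemisimpleModule ℂ[G] (glRep ρ).asModule] :
    IsSemisimpleModule ℂ[G]
      (glRep ((Matrix.GeneralLinearGroup.map (σ : ℂ →+* ℂ)).comp ρ)).asModule := by
  let e : (Fin n → ℂ) →ₛₗ[(σ : ℂ →+* ℂ)] Fin n → ℂ :=
    { toFun := fun v => σ ∘ v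
      map_add' := fun v w => by ext; simp
      map_smul' := fun c v => by ext; simp }
  refine Representation.isSemisimpleModule_asModule_of_semilinear (ρ := glRep ρ) e
    (fun g v => funext fun i => ?_) σ.bijective.comp_left
  exact RingHom.map_mulVec (σ : ℂ →+* ℂ) _ v i

end glRep

/-- If `ρ : G → GL(n, ℂ)` is a semisimple representation and `σ` is a field
automorphism of `ℂ` fixing all character values `tr ρ(g)`, then the entrywise
`σ`-conjugate representation is isomorphic to `ρ`: there is `T ∈ GL(n, ℂ)` with
`σ(ρ(g)) = T ρ(g) T⁻¹` for all `g`. -/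
theorem conjugate_rep_iso_of_fixes_traces
    (n : ℕ) (G : Type*) [Group G] (ρ : G →* Matrix.GeneralLinearGroup (Fin n) ℂ)
    (hss : IsSemisimpleModule (MonoidAlgebra ℂ G) (glRep ρ).asModule)
    (σ : ℂ ≃+* ℂ)
    (hσ : ∀ g, σ ((ρ g : Matrix (Fin n) (Fin n) ℂ).trace) =
      (ρ g : Matrix (Fin n) (Fin n) ℂ).trace) :
    ∃ T : Matrix.GeneralLinearGroup (Fin n) ℂ, ∀ g,
      (ρ g : Matrix (Fin n) (Fin n) ℂ).map σ =
        (T : Matrix (Fin n) (Fin n) ℂ) * (ρ g : Matrix (Fin n) (Fin n) ℂ) *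
          (↑(T⁻¹) : Matrix (Fin n) (Fin n) ℂ) := by
  let ρσ := (Matrix.GeneralLinearGroup.map (σ : ℂ →+* ℂ)).comp ρ
  have := isSemisimpleModule_glRep_map ρ σ
  have hχ : moduleCharacter ℂ ℂ[G] (glRep ρ).asModule =
      moduleCharacter ℂ ℂ[G] (glRep ρσ).asModule :=
    Representation.moduleCharacter_asModule_eq fun g => by
      rw [trace_glRep, trace_glRep, ← hσ g]
      exact AddMonoidHom.map_trace σ _
  obtain ⟨e⟩ := nonempty_linearEquiv_of_moduleCharacter_eq hχ
  obtain ⟨E, hE⟩ := Representation.exists_linearEquiv_of_asModule e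
  exact Matrix.exists_forall_eq_mul_mul_inv_of_linearEquiv E hE
end
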